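/- Let w ∈ A_2 on ℝ. Fix k ∈ ℤ and let 𝒟, 𝒟′ be two (possibly different) translated dyadic grids on ℝ. Let u = Σ_{I∈𝒟, |I|=2^{-k}} ⟨w⟩_I χ_I and v = (Σ_{I∈𝒟′, |I|=2^{-k}} ⟨w^{-1}⟩_I χ_I)^{-1}. Then the joint two-weight constant satisfies [u,v]_{A_2} := sup_J ⟨u⟩_J ⟨v^{-1}⟩_J ≤ 9[w]_{A_2}, where the supremum is over bounded intervals J. -/

import Mathlib

open MeasureTheory

/-- The interval of the translated dyadic grid with offset `α`, scale `2^{-k}`, index `j`: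
`[α + j·2^{-k}, α + (j+1)·2^{-k})`. -/
def gridInterval (α : ℝ) (k : ℤ) (j : ℤ) : Set ℝ :=
  Set.Ico (α + (j : ℝ) * (2 : ℝ) ^ (-k)) (α + ((j : ℝ) + 1) * (2 : ℝ) ^ (-k))

/-- The averaging of `w` over the translated dyadic grid with offset `α` at scale `2^{-k}`:
at `x` the value is the average of `w` over the grid interval containing `x`. -/
noncomputable def gridAvg (w : ℝ → ℝ) (α : ℝ) (k : ℤ) (x : ℝ) : ℝ :=
  ((2 : ℝ) ^ (-k))⁻¹ *
    ∫ t in gridInterval α k ⌊(x - α) / (2 : ℝ) ^ (-k)⌋, w t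

/-- The average of `f` over the bounded interval `(a, b]`. -/
noncomputable def intervalAvg (f : ℝ → ℝ) (a b : ℝ) : ℝ :=
  (b - a)⁻¹ * ∫ x in Set.Ioc a b, f x

/-!
Write `d = 2^{-k}`, `J = (a, b]` and `J* = (a - d, b + d]`; every grid interval meeting `J`
lies in `J*`. If `d ≤ |J|`, averaging over the grid intervals meeting `J` preserves the
integral, so `∫_J u ≤ ∫_{J*} w`, and `|J*| ≤ 3|J|`. If `|J| ≤ d`, then `u ≤ d⁻¹ ∫_{J*} w`
pointwise on `J`, and `|J*| ≤ 3d`. Either way `⟨u⟩_J ≤ 3⟨w⟩_{J*}`, likewise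
`⟨v⁻¹⟩_J ≤ 3⟨w⁻¹⟩_{J*}`, and the `A₂` condition on `J*` gives the bound `9W`.
-/

open Set Function

lemma intervalAvg_nonneg {f : ℝ → ℝ} (hf : 0 ≤ f) {a b : ℝ} (hab : a ≤ b) :
    0 ≤ intervalAvg f a b :=
  mul_nonneg (inv_nonneg.2 (sub_nonneg.2 hab))
    (setIntegral_nonneg measurableSet_Ioc fun x _ => hf x)

section Grid

variable {α : ℝ} {k : ℤ}

lemma mem_gridInterval_iff {j : ℤ} {x : ℝ} :
    x ∈ gridInterval α k j ↔ ⌊(x - α) / (2 : ℝ) ^ (-k)⌋ = j := by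
  have hd : (0 : ℝ) < 2 ^ (-k) := by positivity
  rw [Int.floor_eq_iff, le_div_iff₀ hd, div_lt_iff₀ hd, gridInterval, mem_Ico]
  constructor <;> rintro ⟨h₁, h₂⟩ <;> constructor <;> linarith

lemma mem_gridInterval_floor (x : ℝ) : x ∈ gridInterval α k ⌊(x - α) / (2 : ℝ) ^ (-k)⌋ :=
  mem_gridInterval_iff.2 rfl

lemma pairwise_disjoint_gridInterval : Pairwise (Disjoint on gridInterval α k) :=
  fun _ _ hij => disjoint_left.2 fun _ hi hj =>
    hij ((mem_gridInterval_iff.1 hi).symm.trans (mem_gridInterval_iff.1 hj))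

lemma measurableSet_gridInterval (j : ℤ) : MeasurableSet (gridInterval α k j) :=
  measurableSet_Ico

lemma volume_real_gridInterval (j : ℤ) : volume.real (gridInterval α k j) = (2 : ℝ) ^ (-k) := by
  rw [gridInterval, Real.volume_real_Ico_of_le (by gcongr; linarith)]
  ring

lemma gridInterval_subset_Ioo_of_mem {j : ℤ} {x : ℝ} (hx : x ∈ gridInterval α k j) :
    gridInterval α k j ⊆ Ioo (x - (2 : ℝ) ^ (-k)) (x + (2 : ℝ) ^ (-k)) := by
  intro t ht
  obtain ⟨hx₁, hx₂⟩ := hx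
  obtain ⟨ht₁, ht₂⟩ := ht
  constructor <;> linarith

lemma gridAvg_eq_of_mem (f : ℝ → ℝ) {j : ℤ} {x : ℝ} (hx : x ∈ gridInterval α k j) :
    gridAvg f α k x = ((2 : ℝ) ^ (-k))⁻¹ * ∫ t in gridInterval α k j, f t := by
  rw [gridAvg, mem_gridInterval_iff.1 hx]

lemma gridAvg_nonneg {f : ℝ → ℝ} (hf : 0 ≤ f) (x : ℝ) : 0 ≤ gridAvg f α k x :=
  mul_nonneg (by positivity) (setIntegral_nonneg (measurableSet_gridInterval _) fun t _ => hf t)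

lemma integrableOn_gridAvg_gridInterval (f : ℝ → ℝ) (j : ℤ) :
    IntegrableOn (gridAvg f α k) (gridInterval α k j) :=
  (integrableOn_const (by simp [gridInterval])).congr_fun
    (fun _ hx => (gridAvg_eq_of_mem f hx).symm) (measurableSet_gridInterval j)

lemma setIntegral_gridAvg_gridInterval (f : ℝ → ℝ) (j : ℤ) :
    ∫ x in gridInterval α k j, gridAvg f α k x = ∫ x in gridInterval α k j, f x := by
  rw [setIntegral_congr_fun (measurableSet_gridInterval j) fun _ hx => gridAvg_eq_of_mem f hx,
    setIntegral_const, volume_real_gridInterval, smul_eq_mul, mul_inv_cancel_left₀ (by positivity)]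

lemma setIntegral_gridAvg_biUnion {f : ℝ → ℝ} (hf : LocallyIntegrable f) (s : Finset ℤ) :
    ∫ x in ⋃ j ∈ s, gridInterval α k j, gridAvg f α k x =
      ∫ x in ⋃ j ∈ s, gridInterval α k j, f x := by
  have hmeas : ∀ j ∈ s, MeasurableSet (gridInterval α k j) :=
    fun j _ => measurableSet_gridInterval j
  have hdisj := (pairwise_disjoint_gridInterval (α := α) (k := k)).set_pairwise (↑s)
  rw [integral_biUnion_finset s hmeas hdisj fun j _ => integrableOn_gridAvg_gridInterval f j,
    integral_biUnion_finset s hmeas hdisj fun j _ =>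
      (hf.integrableOn_isCompact isCompact_Icc).mono_set Ico_subset_Icc_self]
  exact Finset.sum_congr rfl fun j _ => setIntegral_gridAvg_gridInterval f j

/-- The indices of the grid intervals that meet `[a, b]`. -/
noncomputable def gridCover (α : ℝ) (k : ℤ) (a b : ℝ) : Finset ℤ :=
  Finset.Icc ⌊(a - α) / (2 : ℝ) ^ (-k)⌋ ⌊(b - α) / (2 : ℝ) ^ (-k)⌋

lemma Ioc_subset_biUnion_gridCover (a b : ℝ) :
    Ioc a b ⊆ ⋃ j ∈ gridCover α k a b, gridInterval α k j := by
  intro x hx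
  refine mem_iUnion₂.2 ⟨_, Finset.mem_Icc.2 ⟨?_, ?_⟩, mem_gridInterval_floor x⟩ <;>
    exact Int.floor_le_floor (by gcongr; linarith [hx.1, hx.2])

lemma biUnion_gridCover_subset_Ioc (a b : ℝ) :
    ⋃ j ∈ gridCover α k a b, gridInterval α k j ⊆
      Ioc (a - (2 : ℝ) ^ (-k)) (b + (2 : ℝ) ^ (-k)) := by
  have hd : (0 : ℝ) < 2 ^ (-k) := by positivity
  simp only [gridCover, iUnion_subset_iff, Finset.mem_Icc]
  rintro j ⟨hm, hM⟩ t ⟨ht₁, ht₂⟩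
  have ha := (div_lt_iff₀ hd).1 (Int.lt_floor_add_one ((a - α) / 2 ^ (-k)))
  have hb := (le_div_iff₀ hd).1 (Int.floor_le ((b - α) / 2 ^ (-k)))
  have hm' := mul_le_mul_of_nonneg_right (Int.cast_le (R := ℝ).2 hm) hd.le
  have hM' := mul_le_mul_of_nonneg_right (Int.cast_le (R := ℝ).2 hM) hd.le
  constructor <;> linarith

lemma integrableOn_gridAvg_Ioc (f : ℝ → ℝ) (a b : ℝ) : IntegrableOn (gridAvg f α k) (Ioc a b) :=
  (integrableOn_finset_iUnion.2 fun j _ => integrableOn_gridAvg_gridInterval f j).mono_set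
    (Ioc_subset_biUnion_gridCover a b)

variable {f : ℝ → ℝ} (hf : 0 ≤ f) (hfi : LocallyIntegrable f)
include hf hfi

lemma setIntegral_gridAvg_Ioc_le (a b : ℝ) :
    ∫ x in Ioc a b, gridAvg f α k x ≤
      ∫ x in Ioc (a - (2 : ℝ) ^ (-k)) (b + (2 : ℝ) ^ (-k)), f x :=
  calc ∫ x in Ioc a b, gridAvg f α k x
      ≤ ∫ x in ⋃ j ∈ gridCover α k a b, gridInterval α k j, gridAvg f α k x :=
        setIntegral_mono_set
          (integrableOn_finset_iUnion.2 fun j _ => integrableOn_gridAvg_gridInterval f j)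
          (ae_of_all _ (gridAvg_nonneg hf)) (LE.le.eventuallyLE (Ioc_subset_biUnion_gridCover a b))
    _ = ∫ x in ⋃ j ∈ gridCover α k a b, gridInterval α k j, f x :=
        setIntegral_gridAvg_biUnion hfi _
    _ ≤ ∫ x in Ioc (a - (2 : ℝ) ^ (-k)) (b + (2 : ℝ) ^ (-k)), f x :=
        setIntegral_mono_set
          ((hfi.integrableOn_isCompact isCompact_Icc).mono_set Ioc_subset_Icc_self)
          (ae_of_all _ hf) (LE.le.eventuallyLE (biUnion_gridCover_subset_Ioc a b))

lemma gridAvg_le_of_mem_Ioc {a b x : ℝ} (hx : x ∈ Ioc a b) :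
    gridAvg f α k x ≤
      ((2 : ℝ) ^ (-k))⁻¹ * ∫ t in Ioc (a - (2 : ℝ) ^ (-k)) (b + (2 : ℝ) ^ (-k)), f t := by
  have hI := mem_gridInterval_floor (α := α) (k := k) x
  rw [gridAvg_eq_of_mem f hI]
  have hsub : gridInterval α k _ ⊆ Ioc (a - (2 : ℝ) ^ (-k)) (b + (2 : ℝ) ^ (-k)) :=
    (gridInterval_subset_Ioo_of_mem hI).trans fun t ht =>
      ⟨by linarith [hx.1, ht.1], by linarith [hx.2, ht.2]⟩
  exact mul_le_mul_of_nonneg_left (setIntegral_mono_set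
    ((hfi.integrableOn_isCompact isCompact_Icc).mono_set Ioc_subset_Icc_self)
    (ae_of_all _ hf) (LE.le.eventuallyLE hsub)) (by positivity)

lemma setIntegral_gridAvg_Ioc_le_mul {a b : ℝ} (hab : a ≤ b) :
    ∫ x in Ioc a b, gridAvg f α k x ≤
      (b - a) * (((2 : ℝ) ^ (-k))⁻¹ * ∫ t in Ioc (a - (2 : ℝ) ^ (-k)) (b + (2 : ℝ) ^ (-k)), f t) :=
  calc ∫ x in Ioc a b, gridAvg f α k x
      ≤ ∫ _ in Ioc a b,
          ((2 : ℝ) ^ (-k))⁻¹ * ∫ t in Ioc (a - (2 : ℝ) ^ (-k)) (b + (2 : ℝ) ^ (-k)), f t :=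
        setIntegral_mono_on (integrableOn_gridAvg_Ioc f a b) (integrableOn_const (by simp))
          measurableSet_Ioc fun _ hx => gridAvg_le_of_mem_Ioc hf hfi hx
    _ = _ := by rw [setIntegral_const, Real.volume_real_Ioc_of_le hab, smul_eq_mul]

theorem intervalAvg_gridAvg_le {a b : ℝ} (hab : a < b) :
    intervalAvg (gridAvg f α k) a b ≤
      3 * intervalAvg f (a - (2 : ℝ) ^ (-k)) (b + (2 : ℝ) ^ (-k)) := by
  set d : ℝ := 2 ^ (-k)
  set P := ∫ t in Ioc (a - d) (b + d), f t
  have hd : 0 < d := by positivity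
  have hL : 0 < b - a := sub_pos.2 hab
  have hP : 0 ≤ P := setIntegral_nonneg measurableSet_Ioc fun t _ => hf t
  suffices h : ∫ x in Ioc a b, gridAvg f α k x ≤ 3 * (b - a) / (b - a + 2 * d) * P by
    rw [intervalAvg, intervalAvg, show b + d - (a - d) = b - a + 2 * d by ring]
    calc (b - a)⁻¹ * ∫ x in Ioc a b, gridAvg f α k x
        ≤ (b - a)⁻¹ * (3 * (b - a) / (b - a + 2 * d) * P) := by gcongr
      _ = 3 * ((b - a + 2 * d)⁻¹ * P) := by field_simp
  rcases le_total d (b - a) with hdL | hLd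
  · calc ∫ x in Ioc a b, gridAvg f α k x ≤ P := setIntegral_gridAvg_Ioc_le hf hfi a b
      _ ≤ 3 * (b - a) / (b - a + 2 * d) * P :=
        le_mul_of_one_le_left hP (by rw [one_le_div (by positivity)]; linarith)
  · have h3 : d⁻¹ ≤ 3 / (b - a + 2 * d) := by
      rw [le_div_iff₀ (by positivity), inv_mul_eq_div, div_le_iff₀ hd]; linarith
    calc ∫ x in Ioc a b, gridAvg f α k x ≤ (b - a) * (d⁻¹ * P) :=
          setIntegral_gridAvg_Ioc_le_mul hf hfi hab.le
      _ ≤ (b - a) * (3 / (b - a + 2 * d) * P) := by gcongr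
      _ = 3 * (b - a) / (b - a + 2 * d) * P := by ring

end Grid

/-- let `w ∈ A₂` with `[w]_{A₂} ≤ W`, and let `u` be the averaging of `w`
over a translated dyadic grid `𝒟` (offset `α`) at scale `2^{-k}`, and
`v = (averaging of w⁻¹ over a grid 𝒟′ (offset β))⁻¹`.  Then the joint constant satisfies
`[u, v]_{A₂} = sup_J ⟨u⟩_J ⟨v⁻¹⟩_J ≤ 9W`. -/
theorem grid_two_weight_A2
    (w : ℝ → ℝ) (hw_pos : ∀ x, 0 < w x) (hw_loc : LocallyIntegrable w volume)
    (hwinv_loc : LocallyIntegrable (fun x => (w x)⁻¹) volume)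
    (W : ℝ)
    (hA2 : ∀ a b : ℝ, a < b →
      intervalAvg w a b * intervalAvg (fun x => (w x)⁻¹) a b ≤ W)
    (k : ℤ) (α β : ℝ) :
    ∀ a b : ℝ, a < b →
      intervalAvg (gridAvg w α k) a b *
        intervalAvg (gridAvg (fun x => (w x)⁻¹) β k) a b ≤ 9 * W := by
  intro a b hab
  have hw : 0 ≤ w := fun x => (hw_pos x).le
  have hwinv : 0 ≤ fun x => (w x)⁻¹ := fun x => inv_nonneg.2 (hw x)
  have hE : a - (2 : ℝ) ^ (-k) < b + (2 : ℝ) ^ (-k) := by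
    linarith [zpow_pos (two_pos : (0 : ℝ) < 2) (-k)]
  calc intervalAvg (gridAvg w α k) a b * intervalAvg (gridAvg (fun x => (w x)⁻¹) β k) a b
      ≤ (3 * intervalAvg w (a - 2 ^ (-k)) (b + 2 ^ (-k))) *
          (3 * intervalAvg (fun x => (w x)⁻¹) (a - 2 ^ (-k)) (b + 2 ^ (-k))) :=
        mul_le_mul (intervalAvg_gridAvg_le hw hw_loc hab)
          (intervalAvg_gridAvg_le hwinv hwinv_loc hab)
          (intervalAvg_nonneg (gridAvg_nonneg hwinv) hab.le)
          (mul_nonneg zero_le_three (intervalAvg_nonneg hw hE.le))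
    _ = 9 * (intervalAvg w (a - 2 ^ (-k)) (b + 2 ^ (-k)) *
          intervalAvg (fun x => (w x)⁻¹) (a - 2 ^ (-k)) (b + 2 ^ (-k))) := by ring
    _ ≤ 9 * W := by gcongr; exact hA2 _ _ hE
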